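/- arXiv:2601.07538 — 4 statements merged into one kernel-verified Lean document; each statement's English description precedes it below -/
import Mathlib

section
/- Let x, y, z be nonzero elements of a division ring R satisfying xyz = -1. Then the following three equations are equivalent: x + y⁻¹ = 1, y + z⁻¹ = 1, and z + x⁻¹ = 1. -/
/-!
Clearing denominators, `x + y⁻¹ = 1` says `x * y = y - 1`, and then `x * y * z = -1` gives
`(y - 1) * z = -1`, i.e. `z⁻¹ = 1 - y`, which is `y + z⁻¹ = 1`. The relation `x * y * z = -1`
is invariant under cyclic rotation, so the same step also gives `y + z⁻¹ = 1 → z + x⁻¹ = 1` and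
`z + x⁻¹ = 1 → x + y⁻¹ = 1`, closing the cycle of implications.
-/

theorem mul_mul_eq_neg_one_rotate {R : Type*} [Ring R] [IsDedekindFiniteMonoid R] {a b c : R}
    (h : a * b * c = -1) : b * c * a = -1 := by
  have : a * -(b * c) = 1 := by rw [mul_neg, ← mul_assoc, h, neg_neg]
  rw [← neg_neg (b * c * a), ← neg_mul, mul_eq_one_symm this]

theorem add_inv_eq_one_of_mul_mul_eq_neg_one {R : Type*} [DivisionRing R] {x y z : R}
    (h : x * y * z = -1) (hxy : x + y⁻¹ = 1) : y + z⁻¹ = 1 := by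
  have hy : y ≠ 0 := by
    rintro rfl
    simp at h
  have hyz : -(y - 1) * z = 1 := by
    calc -(y - 1) * z = -((1 - y⁻¹) * y * z) := by
          rw [sub_mul, inv_mul_cancel₀ hy, one_mul, neg_mul]
      _ = 1 := by rw [← eq_sub_of_add_eq hxy, h, neg_neg]
  rw [← eq_inv_of_mul_eq_one_left hyz]
  abel

theorem statement_0_general {R : Type*} [DivisionRing R] (x y z : R)
    (h : x * y * z = -1) :
    (x + y⁻¹ = 1 ↔ y + z⁻¹ = 1) ∧ (y + z⁻¹ = 1 ↔ z + x⁻¹ = 1) ∧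
      (x + y⁻¹ = 1 ↔ z + x⁻¹ = 1) := by
  have hyzx := mul_mul_eq_neg_one_rotate h
  have hzxy := mul_mul_eq_neg_one_rotate hyzx
  have hxy_yz := add_inv_eq_one_of_mul_mul_eq_neg_one h
  have hyz_zx := add_inv_eq_one_of_mul_mul_eq_neg_one hyzx
  have hzx_xy := add_inv_eq_one_of_mul_mul_eq_neg_one hzxy
  exact ⟨⟨hxy_yz, hzx_xy ∘ hyz_zx⟩, ⟨hyz_zx, hxy_yz ∘ hzx_xy⟩, ⟨hyz_zx ∘ hxy_yz, hzx_xy⟩⟩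

/-- Let `x, y, z` be nonzero elements of a division ring `R`
satisfying `x * y * z = -1`. Then the three equations `x + y⁻¹ = 1`,
`y + z⁻¹ = 1`, and `z + x⁻¹ = 1` are equivalent. -/
theorem statement_0 {R : Type*} [DivisionRing R] (x y z : R)
    (hx : x ≠ 0) (hy : y ≠ 0) (hz : z ≠ 0) (h : x * y * z = -1) :
    (x + y⁻¹ = 1 ↔ y + z⁻¹ = 1) ∧ (y + z⁻¹ = 1 ↔ z + x⁻¹ = 1) ∧
      (x + y⁻¹ = 1 ↔ z + x⁻¹ = 1) :=
  statement_0_general x y z h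
end

section
/- Under the cube monomial relations, one has the conjugation identity b₂·(a₄b₂ + (c₃c₁)⁻¹)·b₂⁻¹ = b₂a₄ + (c₄c₂)⁻¹. Consequently the equation a₄b₂ + (c₃c₁)⁻¹ = 1 holds if and only if the equation b₂a₄ + (c₄c₂)⁻¹ = 1 holds. -/
/-!
The relations `b₁b₄c₁ = b₃b₂c₃ = b₂b₁c₂ = b₄b₃c₄ = -1` give `(c₃c₁)⁻¹ = b₁b₄b₃b₂` and
`(c₄c₂)⁻¹ = b₂b₁b₄b₃`, so conjugation by `b₂` moves the trailing `b₂` of both `a₄b₂` and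
`b₁b₄b₃b₂` to the front. Conjugation fixes only `1`, whence the equivalence.
-/

theorem inv_eq_neg_mul_of_mul_mul_eq_neg_one {R : Type*} [DivisionRing R] {x y c : R}
    (h : x * y * c = -1) : c⁻¹ = -(x * y) :=
  (eq_inv_of_mul_eq_one_left (by rw [neg_mul, h, neg_neg] : -(x * y) * c = 1)).symm

theorem conj_eq_one_iff₀ {G₀ : Type*} [GroupWithZero G₀] {b x : G₀} (hb : b ≠ 0) :
    b * x * b⁻¹ = 1 ↔ x = 1 := by
  rw [mul_inv_eq_one₀ hb, mul_eq_left₀ hb]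

theorem statement_2_general {R : Type*} [DivisionRing R]
    (a₄ b₁ b₂ b₃ b₄ c₁ c₂ c₃ c₄ : R)
    (hb₂ : b₂ ≠ 0)
    (h2 : b₂ * b₁ * c₂ = -1)
    (h4 : b₄ * b₃ * c₄ = -1)
    (h5 : b₁ * b₄ * c₁ = -1)
    (h7 : b₃ * b₂ * c₃ = -1) :
    b₂ * (a₄ * b₂ + (c₃ * c₁)⁻¹) * b₂⁻¹ = b₂ * a₄ + (c₄ * c₂)⁻¹ ∧
      (a₄ * b₂ + (c₃ * c₁)⁻¹ = 1 ↔ b₂ * a₄ + (c₄ * c₂)⁻¹ = 1) := by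
  have hc₃c₁ : (c₃ * c₁)⁻¹ = b₁ * b₄ * (b₃ * b₂) := by
    rw [mul_inv_rev, inv_eq_neg_mul_of_mul_mul_eq_neg_one h5,
      inv_eq_neg_mul_of_mul_mul_eq_neg_one h7, neg_mul_neg]
  have hc₄c₂ : (c₄ * c₂)⁻¹ = b₂ * b₁ * (b₄ * b₃) := by
    rw [mul_inv_rev, inv_eq_neg_mul_of_mul_mul_eq_neg_one h2,
      inv_eq_neg_mul_of_mul_mul_eq_neg_one h4, neg_mul_neg]
  have conj : b₂ * (a₄ * b₂ + (c₃ * c₁)⁻¹) * b₂⁻¹ = b₂ * a₄ + (c₄ * c₂)⁻¹ := by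
    rw [hc₃c₁, hc₄c₂]
    calc b₂ * (a₄ * b₂ + b₁ * b₄ * (b₃ * b₂)) * b₂⁻¹
        = b₂ * (a₄ + b₁ * b₄ * b₃) * b₂ * b₂⁻¹ := by noncomm_ring
      _ = b₂ * a₄ + b₂ * b₁ * (b₄ * b₃) := by rw [mul_inv_cancel_right₀ hb₂]; noncomm_ring
  exact ⟨conj, by rw [← conj, conj_eq_one_iff₀ hb₂]⟩

/-- Under the cube monomial relations, one has the conjugation
identity `b₂·(a₄b₂ + (c₃c₁)⁻¹)·b₂⁻¹ = b₂a₄ + (c₄c₂)⁻¹`; consequently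
`a₄b₂ + (c₃c₁)⁻¹ = 1` iff `b₂a₄ + (c₄c₂)⁻¹ = 1`. -/
theorem statement_2 {R : Type*} [DivisionRing R]
    (a₁ a₂ a₃ a₄ b₁ b₂ b₃ b₄ c₁ c₂ c₃ c₄ : R)
    (ha₁ : a₁ ≠ 0) (ha₂ : a₂ ≠ 0) (ha₃ : a₃ ≠ 0) (ha₄ : a₄ ≠ 0)
    (hb₁ : b₁ ≠ 0) (hb₂ : b₂ ≠ 0) (hb₃ : b₃ ≠ 0) (hb₄ : b₄ ≠ 0)
    (hc₁ : c₁ ≠ 0) (hc₂ : c₂ ≠ 0) (hc₃ : c₃ ≠ 0) (hc₄ : c₄ ≠ 0)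
    (h1 : a₄ * a₁ * c₁ = -1) (h2 : b₂ * b₁ * c₂ = -1)
    (h3 : a₂ * a₃ * c₃ = -1) (h4 : b₄ * b₃ * c₄ = -1)
    (h5 : b₁ * b₄ * c₁ = -1) (h6 : a₁ * a₂ * c₂ = -1)
    (h7 : b₃ * b₂ * c₃ = -1) (h8 : a₃ * a₄ * c₄ = -1) :
    b₂ * (a₄ * b₂ + (c₃ * c₁)⁻¹) * b₂⁻¹ = b₂ * a₄ + (c₄ * c₂)⁻¹ ∧
      (a₄ * b₂ + (c₃ * c₁)⁻¹ = 1 ↔ b₂ * a₄ + (c₄ * c₂)⁻¹ = 1) :=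
  statement_2_general a₄ b₁ b₂ b₃ b₄ c₁ c₂ c₃ c₄ hb₂ h2 h4 h5 h7
end

section
/- For the non-commutative two-by-two move one has bᵢ·b_{i+1} = -(aᵢ·a_{i+1})⁻¹ for every i ∈ ℤ/4ℤ; that is, b₁b₂ = -(a₁a₂)⁻¹, b₂b₃ = -(a₂a₃)⁻¹, b₃b₄ = -(a₃a₄)⁻¹, and b₄b₁ = -(a₄a₁)⁻¹. -/
/-!
Put `z = p q r s` for the relevant rotation `p q r s` of `a₁ a₂ a₃ a₄`. Each product `bⱼ b_{j+1}`
is `(1 - z⁻¹) p (1 - q r s p)⁻¹ q` or `(1 - z)⁻¹ p (1 - (q r s p)⁻¹) q`. Pushing `p` to the right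
through the middle factor (`p (1 - y p)⁻¹ = (1 - p y)⁻¹ p`) leaves `(1 - z⁻¹)(1 - z)⁻¹ p q` in
either order, and `(1 - z⁻¹)(1 - z)⁻¹ = -z⁻¹` while `z⁻¹ p q = (r s)⁻¹`.
-/

section DivisionRing

variable {R : Type*} [DivisionRing R]

theorem mul_inv_one_sub_mul_comm (x y : R) : x * (1 - y * x)⁻¹ = (1 - x * y)⁻¹ * x := by
  by_cases hxy : x * y = 1
  · simp [hxy, mul_eq_one_comm.mp hxy]
  · have h : 1 - x * y ≠ 0 := sub_ne_zero.mpr (Ne.symm hxy)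
    have h' : 1 - y * x ≠ 0 := sub_ne_zero.mpr fun e => hxy (mul_eq_one_comm.mp e.symm)
    rw [eq_inv_mul_iff_mul_eq₀ h, ← mul_assoc, mul_inv_eq_iff_eq_mul₀ h']
    noncomm_ring

theorem mul_one_sub_inv_mul_comm (x y : R) : x * (1 - (y * x)⁻¹) = (1 - (x * y)⁻¹) * x := by
  rcases eq_or_ne x 0 with rfl | hx
  · simp
  · rw [mul_inv_rev, mul_inv_rev, mul_sub, sub_mul, mul_inv_cancel_left₀ hx,
      inv_mul_cancel_right₀ hx, mul_one, one_mul]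

theorem one_sub_inv_mul_inv_one_sub {z : R} (hz : z ≠ 0) (hz' : 1 - z ≠ 0) :
    (1 - z⁻¹) * (1 - z)⁻¹ = -z⁻¹ := by
  have : 1 - z⁻¹ = -(z⁻¹ * (1 - z)) := by rw [mul_sub, mul_one, inv_mul_cancel₀ hz, neg_sub]
  rw [this, neg_mul, mul_inv_cancel_right₀ hz']

theorem inv_one_sub_mul_one_sub_inv {z : R} (hz : z ≠ 0) (hz' : 1 - z ≠ 0) :
    (1 - z)⁻¹ * (1 - z⁻¹) = -z⁻¹ := by
  have : 1 - z⁻¹ = -((1 - z) * z⁻¹) := by rw [sub_mul, one_mul, mul_inv_cancel₀ hz, neg_sub]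
  rw [this, mul_neg, inv_mul_cancel_left₀ hz']

variable {p q r s : R}

theorem inv_mul_mul_cancel_left (hp : p ≠ 0) (hq : q ≠ 0) :
    (p * q * r * s)⁻¹ * p * q = (r * s)⁻¹ := by
  rw [mul_assoc, mul_assoc (p * q), mul_inv_rev, inv_mul_cancel_right₀ (mul_ne_zero hp hq)]

theorem one_sub_inv_mul_mul_inv_one_sub_mul (hp : p ≠ 0) (hq : q ≠ 0) (hr : r ≠ 0) (hs : s ≠ 0)
    (h : 1 - p * q * r * s ≠ 0) :
    (1 - (p * q * r * s)⁻¹) * p * ((1 - q * r * s * p)⁻¹ * q) = -(r * s)⁻¹ := by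
  have hz : p * q * r * s ≠ 0 := mul_ne_zero (mul_ne_zero (mul_ne_zero hp hq) hr) hs
  calc (1 - (p * q * r * s)⁻¹) * p * ((1 - q * r * s * p)⁻¹ * q)
      = (1 - (p * q * r * s)⁻¹) * (p * (1 - q * r * s * p)⁻¹) * q := by simp only [mul_assoc]
    _ = (1 - (p * q * r * s)⁻¹) * (1 - p * q * r * s)⁻¹ * p * q := by
      rw [mul_inv_one_sub_mul_comm]; simp only [mul_assoc]
    _ = -(r * s)⁻¹ := by
      rw [one_sub_inv_mul_inv_one_sub hz h, neg_mul, neg_mul, inv_mul_mul_cancel_left hp hq]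

theorem inv_one_sub_mul_mul_one_sub_inv_mul (hp : p ≠ 0) (hq : q ≠ 0) (hr : r ≠ 0) (hs : s ≠ 0)
    (h : 1 - p * q * r * s ≠ 0) :
    (1 - p * q * r * s)⁻¹ * p * ((1 - (q * r * s * p)⁻¹) * q) = -(r * s)⁻¹ := by
  have hz : p * q * r * s ≠ 0 := mul_ne_zero (mul_ne_zero (mul_ne_zero hp hq) hr) hs
  calc (1 - p * q * r * s)⁻¹ * p * ((1 - (q * r * s * p)⁻¹) * q)
      = (1 - p * q * r * s)⁻¹ * (p * (1 - (q * r * s * p)⁻¹)) * q := by simp only [mul_assoc]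
    _ = (1 - p * q * r * s)⁻¹ * (1 - (p * q * r * s)⁻¹) * p * q := by
      rw [mul_one_sub_inv_mul_comm]; simp only [mul_assoc]
    _ = -(r * s)⁻¹ := by
      rw [inv_one_sub_mul_one_sub_inv hz h, neg_mul, neg_mul, inv_mul_mul_cancel_left hp hq]

end DivisionRing

/-- For the non-commutative two-by-two move one has
`bᵢ·b_{i+1} = -(aᵢ·a_{i+1})⁻¹` for every `i ∈ ℤ/4ℤ`. -/
theorem statement_7 {R : Type*} [DivisionRing R]
    (a₁ a₂ a₃ a₄ A₁ A₂ A₃ A₄ b₁ b₂ b₃ b₄ : R)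
    (ha₁ : a₁ ≠ 0) (ha₂ : a₂ ≠ 0) (ha₃ : a₃ ≠ 0) (ha₄ : a₄ ≠ 0)
    (hA₁ : A₁ = a₁ * a₂ * a₃ * a₄) (hA₂ : A₂ = a₂ * a₃ * a₄ * a₁)
    (hA₃ : A₃ = a₃ * a₄ * a₁ * a₂) (hA₄ : A₄ = a₄ * a₁ * a₂ * a₃)
    (h₁ : 1 - A₁ ≠ 0) (h₂ : 1 - A₂ ≠ 0) (h₃ : 1 - A₃ ≠ 0) (h₄ : 1 - A₄ ≠ 0)
    (hb₁ : b₁ = (1 - A₃⁻¹) * a₃) (hb₂ : b₂ = (1 - A₄)⁻¹ * a₄)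
    (hb₃ : b₃ = (1 - A₁⁻¹) * a₁) (hb₄ : b₄ = (1 - A₂)⁻¹ * a₂) :
    b₁ * b₂ = -(a₁ * a₂)⁻¹ ∧ b₂ * b₃ = -(a₂ * a₃)⁻¹ ∧
      b₃ * b₄ = -(a₃ * a₄)⁻¹ ∧ b₄ * b₁ = -(a₄ * a₁)⁻¹ := by
  subst hA₁ hA₂ hA₃ hA₄ hb₁ hb₂ hb₃ hb₄
  exact ⟨one_sub_inv_mul_mul_inv_one_sub_mul ha₃ ha₄ ha₁ ha₂ h₃,
    inv_one_sub_mul_mul_one_sub_inv_mul ha₄ ha₁ ha₂ ha₃ h₄,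
    one_sub_inv_mul_mul_inv_one_sub_mul ha₁ ha₂ ha₃ ha₄ h₁,
    inv_one_sub_mul_mul_one_sub_inv_mul ha₂ ha₃ ha₄ ha₁ h₂⟩
end

section
/- The square of the non-commutative two-by-two move is the identity up to cyclic relabeling: setting (x₁, x₂, x₃, x₄) := (b₂, b₃, b₄, b₁) and Xᵢ := xᵢ·x_{i+1}·x_{i+2}·x_{i+3} (indices mod 4), one has 1 - Xᵢ ≠ 0 for all i, and applying the same formulas, (1 - X₃⁻¹)x₃ = a₂, (1 - X₄)⁻¹x₄ = a₃, (1 - X₁⁻¹)x₁ = a₄, and (1 - X₂)⁻¹x₂ = a₁. -/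
/-!
Since `aᵢ A_{i+1} = Aᵢ aᵢ`, the element `aᵢ` conjugates `(1 - A_{i+1})⁻¹` into `(1 - Aᵢ)⁻¹` and
`1 - A_{i+1}⁻¹` into `1 - Aᵢ⁻¹`. Pushing `aᵢ` to the right in `bⱼ b_{j+1}` therefore puts `1 - Aᵢ⁻¹`
next to `(1 - Aᵢ)⁻¹`, whose product is `-Aᵢ⁻¹`, and the product of four consecutive `bⱼ` collapses:
`X₁ = A₄⁻¹`, `X₂ = A₁⁻¹`, `X₃ = A₂⁻¹`, `X₄ = A₃⁻¹`. The second move then cancels the first, e.g.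
`(1 - X₃⁻¹) x₃ = (1 - A₂)(1 - A₂)⁻¹ a₂ = a₂`.
-/

section GroupWithZero

variable {G₀ : Type*} [GroupWithZero G₀]

theorem mul_inv_mul_mul_inv_mul_eq_inv (u v : G₀) :
    (u * v)⁻¹ * u * ((v * u)⁻¹ * v) = (u * v)⁻¹ := by
  rcases eq_or_ne u 0 with rfl | hu
  · simp
  rcases eq_or_ne v 0 with rfl | hv
  · simp
  rw [mul_inv_rev v u, mul_assoc, ← mul_assoc u, ← mul_assoc u, mul_inv_cancel₀ hu, one_mul,
    inv_mul_cancel₀ hv, mul_one]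

end GroupWithZero

section DivisionRing

variable {R : Type*} [DivisionRing R] {A B a b c d : R}

theorem one_sub_inv_eq_neg_mul (hA : A ≠ 0) : 1 - A⁻¹ = -((1 - A) * A⁻¹) := by
  rw [sub_mul, one_mul, mul_inv_cancel₀ hA, neg_sub]

theorem one_sub_inv_eq_neg_inv_mul (hA : A ≠ 0) : 1 - A⁻¹ = -(A⁻¹ * (1 - A)) := by
  rw [mul_sub, mul_one, inv_mul_cancel₀ hA, neg_sub]

theorem one_sub_inv_ne_zero (hA : A ≠ 0) (h : 1 - A ≠ 0) : 1 - A⁻¹ ≠ 0 := by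
  rw [one_sub_inv_eq_neg_mul hA]
  exact neg_ne_zero.mpr (mul_ne_zero h (inv_ne_zero hA))

theorem one_sub_inv_mul_inv_one_sub_s9 (hA : A ≠ 0) (h : 1 - A ≠ 0) :
    (1 - A⁻¹) * (1 - A)⁻¹ = -A⁻¹ := by
  rw [one_sub_inv_eq_neg_inv_mul hA, neg_mul, mul_inv_cancel_right₀ h]

theorem inv_one_sub_mul_one_sub_inv_s9 (hA : A ≠ 0) (h : 1 - A ≠ 0) :
    (1 - A)⁻¹ * (1 - A⁻¹) = -A⁻¹ := by
  rw [one_sub_inv_eq_neg_mul hA, mul_neg, inv_mul_cancel_left₀ h]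

theorem SemiconjBy.inv_one_sub (hs : SemiconjBy a B A) : SemiconjBy a (1 - B)⁻¹ (1 - A)⁻¹ :=
  ((SemiconjBy.one_right a).sub_right hs).inv_right₀

theorem SemiconjBy.one_sub_inv (hs : SemiconjBy a B A) : SemiconjBy a (1 - B⁻¹) (1 - A⁻¹) :=
  (SemiconjBy.one_right a).sub_right hs.inv_right₀

theorem one_sub_inv_mul_mul_inv_one_sub_mul_s9 (hA : A ≠ 0) (h : 1 - A ≠ 0)
    (hs : SemiconjBy a B A) : (1 - A⁻¹) * a * ((1 - B)⁻¹ * b) = -(A⁻¹ * a * b) := by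
  rw [mul_assoc _ a, ← mul_assoc a, hs.inv_one_sub.eq, ← mul_assoc, ← mul_assoc,
    one_sub_inv_mul_inv_one_sub_s9 hA h, neg_mul, neg_mul]

theorem inv_one_sub_mul_mul_one_sub_inv_mul_s9 (hA : A ≠ 0) (h : 1 - A ≠ 0)
    (hs : SemiconjBy a B A) : (1 - A)⁻¹ * a * ((1 - B⁻¹) * b) = -(A⁻¹ * a * b) := by
  rw [mul_assoc _ a, ← mul_assoc a, hs.one_sub_inv.eq, ← mul_assoc, ← mul_assoc,
    inv_one_sub_mul_one_sub_inv_s9 hA h, neg_mul, neg_mul]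

theorem semiconjBy_cyclic (a b c d : R) : SemiconjBy a (b * c * d * a) (a * b * c * d) := by
  simp only [SemiconjBy, mul_assoc]

theorem cyclic_prod_one_sub_inv_first (ha : a ≠ 0) (hb : b ≠ 0) (hc : c ≠ 0) (hd : d ≠ 0)
    (habcd : 1 - a * b * c * d ≠ 0) (hcdab : 1 - c * d * a * b ≠ 0) :
    (1 - (a * b * c * d)⁻¹) * a * ((1 - b * c * d * a)⁻¹ * b) *
      ((1 - (c * d * a * b)⁻¹) * c) * ((1 - d * a * b * c)⁻¹ * d) = (a * b * c * d)⁻¹ := by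
  rw [mul_assoc _ ((1 - (c * d * a * b)⁻¹) * c),
    one_sub_inv_mul_mul_inv_one_sub_mul_s9 (by simp [ha, hb, hc, hd]) habcd
      (semiconjBy_cyclic a b c d),
    one_sub_inv_mul_mul_inv_one_sub_mul_s9 (by simp [ha, hb, hc, hd]) hcdab
      (semiconjBy_cyclic c d a b),
    neg_mul_neg]
  simpa only [mul_assoc] using mul_inv_mul_mul_inv_mul_eq_inv (a * b) (c * d)

theorem cyclic_prod_inv_one_sub_first (ha : a ≠ 0) (hb : b ≠ 0) (hc : c ≠ 0) (hd : d ≠ 0)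
    (habcd : 1 - a * b * c * d ≠ 0) (hcdab : 1 - c * d * a * b ≠ 0) :
    (1 - a * b * c * d)⁻¹ * a * ((1 - (b * c * d * a)⁻¹) * b) *
      ((1 - c * d * a * b)⁻¹ * c) * ((1 - (d * a * b * c)⁻¹) * d) = (a * b * c * d)⁻¹ := by
  rw [mul_assoc _ ((1 - c * d * a * b)⁻¹ * c),
    inv_one_sub_mul_mul_one_sub_inv_mul_s9 (by simp [ha, hb, hc, hd]) habcd
      (semiconjBy_cyclic a b c d),
    inv_one_sub_mul_mul_one_sub_inv_mul_s9 (by simp [ha, hb, hc, hd]) hcdab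
      (semiconjBy_cyclic c d a b),
    neg_mul_neg]
  simpa only [mul_assoc] using mul_inv_mul_mul_inv_mul_eq_inv (a * b) (c * d)

end DivisionRing

/-- The square of the non-commutative two-by-two move is the
identity up to cyclic relabeling: setting `(x₁,x₂,x₃,x₄) := (b₂,b₃,b₄,b₁)` and
`Xᵢ := xᵢx_{i+1}x_{i+2}x_{i+3}`, one has `1 - Xᵢ ≠ 0` for all `i` and, applying
the same formulas, `(1 - X₃⁻¹)x₃ = a₂`, `(1 - X₄)⁻¹x₄ = a₃`,
`(1 - X₁⁻¹)x₁ = a₄`, `(1 - X₂)⁻¹x₂ = a₁`. -/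
theorem statement_9 {R : Type*} [DivisionRing R]
    (a₁ a₂ a₃ a₄ A₁ A₂ A₃ A₄ b₁ b₂ b₃ b₄ X₁ X₂ X₃ X₄ : R)
    (ha₁ : a₁ ≠ 0) (ha₂ : a₂ ≠ 0) (ha₃ : a₃ ≠ 0) (ha₄ : a₄ ≠ 0)
    (hA₁ : A₁ = a₁ * a₂ * a₃ * a₄) (hA₂ : A₂ = a₂ * a₃ * a₄ * a₁)
    (hA₃ : A₃ = a₃ * a₄ * a₁ * a₂) (hA₄ : A₄ = a₄ * a₁ * a₂ * a₃)
    (h₁ : 1 - A₁ ≠ 0) (h₂ : 1 - A₂ ≠ 0) (h₃ : 1 - A₃ ≠ 0) (h₄ : 1 - A₄ ≠ 0)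
    (hb₁ : b₁ = (1 - A₃⁻¹) * a₃) (hb₂ : b₂ = (1 - A₄)⁻¹ * a₄)
    (hb₃ : b₃ = (1 - A₁⁻¹) * a₁) (hb₄ : b₄ = (1 - A₂)⁻¹ * a₂)
    -- `(x₁, x₂, x₃, x₄) := (b₂, b₃, b₄, b₁)`, `Xᵢ := xᵢ·x_{i+1}·x_{i+2}·x_{i+3}`
    (hX₁ : X₁ = b₂ * b₃ * b₄ * b₁) (hX₂ : X₂ = b₃ * b₄ * b₁ * b₂)
    (hX₃ : X₃ = b₄ * b₁ * b₂ * b₃) (hX₄ : X₄ = b₁ * b₂ * b₃ * b₄) :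
    (1 - X₁ ≠ 0 ∧ 1 - X₂ ≠ 0 ∧ 1 - X₃ ≠ 0 ∧ 1 - X₄ ≠ 0) ∧
    ((1 - X₃⁻¹) * b₄ = a₂ ∧ (1 - X₄)⁻¹ * b₁ = a₃ ∧
      (1 - X₁⁻¹) * b₂ = a₄ ∧ (1 - X₂)⁻¹ * b₃ = a₁) := by
  subst hb₁ hb₂ hb₃ hb₄
  have hX₁A : X₁ = A₄⁻¹ := by
    subst hX₁ hA₁ hA₂ hA₃ hA₄; exact cyclic_prod_inv_one_sub_first ha₄ ha₁ ha₂ ha₃ h₄ h₂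
  have hX₂A : X₂ = A₁⁻¹ := by
    subst hX₂ hA₁ hA₂ hA₃ hA₄; exact cyclic_prod_one_sub_inv_first ha₁ ha₂ ha₃ ha₄ h₁ h₃
  have hX₃A : X₃ = A₂⁻¹ := by
    subst hX₃ hA₁ hA₂ hA₃ hA₄; exact cyclic_prod_inv_one_sub_first ha₂ ha₃ ha₄ ha₁ h₂ h₄
  have hX₄A : X₄ = A₃⁻¹ := by
    subst hX₄ hA₁ hA₂ hA₃ hA₄; exact cyclic_prod_one_sub_inv_first ha₃ ha₄ ha₁ ha₂ h₃ h₁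
  obtain ⟨hA₁₀, hA₂₀, hA₃₀, hA₄₀⟩ : A₁ ≠ 0 ∧ A₂ ≠ 0 ∧ A₃ ≠ 0 ∧ A₄ ≠ 0 := by
    subst hA₁ hA₂ hA₃ hA₄; simp [*]
  rw [hX₁A, hX₂A, hX₃A, hX₄A, inv_inv, inv_inv]
  exact ⟨⟨one_sub_inv_ne_zero hA₄₀ h₄, one_sub_inv_ne_zero hA₁₀ h₁,
    one_sub_inv_ne_zero hA₂₀ h₂, one_sub_inv_ne_zero hA₃₀ h₃⟩,
    mul_inv_cancel_left₀ h₂ a₂, inv_mul_cancel_left₀ (one_sub_inv_ne_zero hA₃₀ h₃) a₃,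
    mul_inv_cancel_left₀ h₄ a₄, inv_mul_cancel_left₀ (one_sub_inv_ne_zero hA₁₀ h₁) a₁⟩
end
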